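/- The operators M₊ = -z²∂_z + ∂_{z̄} + bz - (z/2)σ_z, M₋ = ∂_z - z̄²∂_{z̄} - bz̄ + (z̄/2)σ_z, and M₃ = z∂_z - z̄∂_{z̄} - b + (1/2)σ_z, acting on smooth ℂ²-valued functions of (z, z̄), satisfy the sl(2) commutation relations [M₃, M₊] = M₊, [M₃, M₋] = -M₋, and [M₊, M₋] = 2M₃. -/

import Mathlib

open Complex

/-- Directional real derivative of a ℂ²-valued function on ℂ. -/
noncomputable def pd (f : ℂ → (Fin 2 → ℂ)) (v : ℂ) (z : ℂ) : Fin 2 → ℂ := fderiv ℝ f z v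

/-- Wirtinger derivative `∂_z`. -/
noncomputable def wdz (f : ℂ → (Fin 2 → ℂ)) (z : ℂ) : Fin 2 → ℂ :=
  ((1 : ℂ) / 2) • (pd f 1 z - Complex.I • pd f Complex.I z)

/-- Wirtinger derivative `∂_{z̄}`. -/
noncomputable def wdzbar (f : ℂ → (Fin 2 → ℂ)) (z : ℂ) : Fin 2 → ℂ :=
  ((1 : ℂ) / 2) • (pd f 1 z + Complex.I • pd f Complex.I z)

/-- The Pauli matrix `σ_z = diag(1,-1)` acting on ℂ². -/
def sigmaZ (v : Fin 2 → ℂ) : Fin 2 → ℂ := ![v 0, -v 1]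

/-- `M₊ = -z²∂_z + ∂_{z̄} + bz - (z/2)σ_z`. -/
noncomputable def Mplus (b : ℝ) (f : ℂ → (Fin 2 → ℂ)) : ℂ → (Fin 2 → ℂ) := fun z =>
  (-z ^ 2) • wdz f z + wdzbar f z + ((b : ℂ) * z) • f z - (z / 2) • sigmaZ (f z)

/-- `M₋ = ∂_z - z̄²∂_{z̄} - bz̄ + (z̄/2)σ_z`. -/
noncomputable def Mminus (b : ℝ) (f : ℂ → (Fin 2 → ℂ)) : ℂ → (Fin 2 → ℂ) := fun z =>
  wdz f z - ((starRingEnd ℂ) z ^ 2) • wdzbar f z - ((b : ℂ) * (starRingEnd ℂ) z) • f z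
    + ((starRingEnd ℂ) z / 2) • sigmaZ (f z)

/-- `M₃ = z∂_z - z̄∂_{z̄} - b + (1/2)σ_z`. -/
noncomputable def Mthree (b : ℝ) (f : ℂ → (Fin 2 → ℂ)) : ℂ → (Fin 2 → ℂ) := fun z =>
  z • wdz f z - (starRingEnd ℂ) z • wdzbar f z - (b : ℂ) • f z + ((1 : ℂ) / 2) • sigmaZ (f z)

section helpers
set_option linter.unnecessarySeqFocus false
variable {f g h : ℂ → (Fin 2 → ℂ)} {z v w : ℂ} {b : ℝ}

lemma contDiff_pd (hf : ContDiff ℝ (⊤ : ℕ∞) f) (v : ℂ) : ContDiff ℝ (⊤ : ℕ∞) (pd f v) :=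
  (hf.fderiv_right (by simp)).clm_apply contDiff_const

lemma contDiff_wdz (hf : ContDiff ℝ (⊤ : ℕ∞) f) : ContDiff ℝ (⊤ : ℕ∞) (wdz f) := by
  exact (((contDiff_pd hf 1).sub ((contDiff_pd hf I).const_smul I)).const_smul ((1:ℂ)/2))

lemma contDiff_wdzbar (hf : ContDiff ℝ (⊤ : ℕ∞) f) : ContDiff ℝ (⊤ : ℕ∞) (wdzbar f) := by
  exact (((contDiff_pd hf 1).add ((contDiff_pd hf I).const_smul I)).const_smul ((1:ℂ)/2))

lemma sigmaZ_add (u v : Fin 2 → ℂ) : sigmaZ (u + v) = sigmaZ u + sigmaZ v := by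
  funext i; fin_cases i <;> simp [sigmaZ] <;> ring

lemma sigmaZ_sub (u v : Fin 2 → ℂ) : sigmaZ (u - v) = sigmaZ u - sigmaZ v := by
  funext i; fin_cases i <;> simp [sigmaZ] <;> ring

lemma sigmaZ_smul (c : ℂ) (u : Fin 2 → ℂ) : sigmaZ (c • u) = c • sigmaZ u := by
  funext i; fin_cases i <;> simp [sigmaZ]

lemma sigmaZ_rsmul (c : ℝ) (u : Fin 2 → ℂ) : sigmaZ (c • u) = c • sigmaZ u := by
  funext i; fin_cases i <;> simp [sigmaZ]

lemma sigmaZ_sigmaZ (u : Fin 2 → ℂ) : sigmaZ (sigmaZ u) = u := by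
  funext i; fin_cases i <;> simp [sigmaZ]

noncomputable def sigmaCLM : (Fin 2 → ℂ) →L[ℝ] (Fin 2 → ℂ) :=
  LinearMap.toContinuousLinearMap
    { toFun := sigmaZ, map_add' := sigmaZ_add, map_smul' := fun c u => sigmaZ_rsmul c u }

lemma sigmaCLM_apply (u : Fin 2 → ℂ) : sigmaCLM u = sigmaZ u := rfl

lemma contDiff_sigma (hf : ContDiff ℝ (⊤ : ℕ∞) f) : ContDiff ℝ (⊤ : ℕ∞) (fun w => sigmaZ (f w)) :=
  sigmaCLM.contDiff.comp hf

lemma pd_sigma (hf : ContDiff ℝ (⊤ : ℕ∞) f) (v z : ℂ) :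
    pd (fun w => sigmaZ (f w)) v z = sigmaZ (pd f v z) := by
  have hdf : DifferentiableAt ℝ f z := (hf.differentiable (by simp)).differentiableAt
  have e : (fun w => sigmaZ (f w)) = fun w => sigmaCLM (f w) := rfl
  rw [pd, e, fderiv_clm_apply (differentiableAt_const _) hdf]
  simp [sigmaCLM_apply, pd]

lemma wdz_sigma (hf : ContDiff ℝ (⊤ : ℕ∞) f) (z : ℂ) :
    wdz (fun w => sigmaZ (f w)) z = sigmaZ (wdz f z) := by
  rw [wdz, wdz, pd_sigma hf, pd_sigma hf, sigmaZ_smul, sigmaZ_sub, sigmaZ_smul]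

lemma wdzbar_sigma (hf : ContDiff ℝ (⊤ : ℕ∞) f) (z : ℂ) :
    wdzbar (fun w => sigmaZ (f w)) z = sigmaZ (wdzbar f z) := by
  rw [wdzbar, wdzbar, pd_sigma hf, pd_sigma hf, sigmaZ_smul, sigmaZ_add, sigmaZ_smul]

lemma pd_add (hg : DifferentiableAt ℝ g z) (hh : DifferentiableAt ℝ h z) (v : ℂ) :
    pd (fun w => g w + h w) v z = pd g v z + pd h v z := by
  simp [pd, fderiv_fun_add hg hh]

lemma pd_sub (hg : DifferentiableAt ℝ g z) (hh : DifferentiableAt ℝ h z) (v : ℂ) :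
    pd (fun w => g w - h w) v z = pd g v z - pd h v z := by
  simp [pd, fderiv_fun_sub hg hh]

lemma pd_const_smul (c : ℂ) (hg : DifferentiableAt ℝ g z) (v : ℂ) :
    pd (fun w => c • g w) v z = c • pd g v z := by
  simp [pd, fderiv_fun_const_smul hg c]

lemma pd_smul (a : ℂ → ℂ) (ha : DifferentiableAt ℝ a z) (hg : DifferentiableAt ℝ g z) (v : ℂ) :
    pd (fun w => a w • g w) v z = (fderiv ℝ a z v) • g z + a z • pd g v z := by
  rw [pd, fderiv_fun_smul ha hg]
  simp [pd]; abel

lemma wdz_add (hg : DifferentiableAt ℝ g z) (hh : DifferentiableAt ℝ h z) :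
    wdz (fun w => g w + h w) z = wdz g z + wdz h z := by
  rw [wdz, wdz, wdz, pd_add hg hh, pd_add hg hh]; module

lemma wdz_sub (hg : DifferentiableAt ℝ g z) (hh : DifferentiableAt ℝ h z) :
    wdz (fun w => g w - h w) z = wdz g z - wdz h z := by
  rw [wdz, wdz, wdz, pd_sub hg hh, pd_sub hg hh]; module

lemma wdz_const_smul (c : ℂ) (hg : DifferentiableAt ℝ g z) :
    wdz (fun w => c • g w) z = c • wdz g z := by
  rw [wdz, wdz, pd_const_smul c hg, pd_const_smul c hg]; module

lemma wdz_smul (a : ℂ → ℂ) (ha : DifferentiableAt ℝ a z) (hg : DifferentiableAt ℝ g z) :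
    wdz (fun w => a w • g w) z
      = (((1:ℂ)/2) * (fderiv ℝ a z 1 - I * fderiv ℝ a z I)) • g z + a z • wdz g z := by
  rw [wdz, wdz, pd_smul a ha hg, pd_smul a ha hg]; module

lemma wdzbar_add (hg : DifferentiableAt ℝ g z) (hh : DifferentiableAt ℝ h z) :
    wdzbar (fun w => g w + h w) z = wdzbar g z + wdzbar h z := by
  rw [wdzbar, wdzbar, wdzbar, pd_add hg hh, pd_add hg hh]; module

lemma wdzbar_sub (hg : DifferentiableAt ℝ g z) (hh : DifferentiableAt ℝ h z) :
    wdzbar (fun w => g w - h w) z = wdzbar g z - wdzbar h z := by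
  rw [wdzbar, wdzbar, wdzbar, pd_sub hg hh, pd_sub hg hh]; module

lemma wdzbar_const_smul (c : ℂ) (hg : DifferentiableAt ℝ g z) :
    wdzbar (fun w => c • g w) z = c • wdzbar g z := by
  rw [wdzbar, wdzbar, pd_const_smul c hg, pd_const_smul c hg]; module

lemma wdzbar_smul (a : ℂ → ℂ) (ha : DifferentiableAt ℝ a z) (hg : DifferentiableAt ℝ g z) :
    wdzbar (fun w => a w • g w) z
      = (((1:ℂ)/2) * (fderiv ℝ a z 1 + I * fderiv ℝ a z I)) • g z + a z • wdzbar g z := by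
  rw [wdzbar, wdzbar, pd_smul a ha hg, pd_smul a ha hg]; module

lemma pd_comm (hf : ContDiff ℝ (⊤ : ℕ∞) f) (v w z : ℂ) :
    pd (pd f w) v z = pd (pd f v) w z := by
  have hd : DifferentiableAt ℝ (fderiv ℝ f) z :=
    ((hf.fderiv_right (m := (⊤ : ℕ∞)) ((by simp))).differentiable (by simp)).differentiableAt
  have h1 : ∀ u u' : ℂ, pd (pd f u) u' z = fderiv ℝ (fderiv ℝ f) z u' u := by
    intro u u'
    show fderiv ℝ (fun y => fderiv ℝ f y u) z u' = _
    rw [fderiv_clm_apply hd (differentiableAt_const u)]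
    simp
  rw [h1, h1]
  exact (hf.contDiffAt.isSymmSndFDerivAt (by rw [minSmoothness_of_isRCLikeNormedField]; exact WithTop.coe_le_coe.mpr (le_top : (2 : ℕ∞) ≤ ⊤))).eq v w

lemma pd_wdz (hf : ContDiff ℝ (⊤ : ℕ∞) f) (v z : ℂ) :
    pd (wdz f) v z = ((1:ℂ)/2) • (pd (pd f 1) v z - I • pd (pd f I) v z) := by
  have h1 : DifferentiableAt ℝ (pd f 1) z := ((contDiff_pd hf 1).differentiable (by simp)).differentiableAt
  have hI : DifferentiableAt ℝ (pd f I) z := ((contDiff_pd hf I).differentiable (by simp)).differentiableAt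
  have e : wdz f = fun w => ((1:ℂ)/2) • (pd f 1 w - I • pd f I w) := rfl
  rw [e, pd_const_smul _ (h1.fun_sub (hI.fun_const_smul I)), pd_sub h1 (hI.fun_const_smul I),
    pd_const_smul _ hI]

lemma pd_wdzbar (hf : ContDiff ℝ (⊤ : ℕ∞) f) (v z : ℂ) :
    pd (wdzbar f) v z = ((1:ℂ)/2) • (pd (pd f 1) v z + I • pd (pd f I) v z) := by
  have h1 : DifferentiableAt ℝ (pd f 1) z := ((contDiff_pd hf 1).differentiable (by simp)).differentiableAt
  have hI : DifferentiableAt ℝ (pd f I) z := ((contDiff_pd hf I).differentiable (by simp)).differentiableAt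
  have e : wdzbar f = fun w => ((1:ℂ)/2) • (pd f 1 w + I • pd f I w) := rfl
  rw [e, pd_const_smul _ (h1.fun_add (hI.fun_const_smul I)), pd_add h1 (hI.fun_const_smul I),
    pd_const_smul _ hI]

lemma wdz_comm (hf : ContDiff ℝ (⊤ : ℕ∞) f) (z : ℂ) :
    wdzbar (wdz f) z = wdz (wdzbar f) z := by
  rw [wdzbar, wdz, pd_wdz hf, pd_wdz hf, pd_wdzbar hf, pd_wdzbar hf, pd_comm hf I 1]
  module

-- coefficient derivatives
lemma hconj : HasFDerivAt (fun w : ℂ => (starRingEnd ℂ) w)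
    (Complex.conjCLE.toContinuousLinearMap) z := Complex.conjCLE.hasFDerivAt

lemma hnsq : HasFDerivAt (fun w : ℂ => -w ^ 2)
    ((ContinuousLinearMap.smulRight (1 : ℂ →L[ℂ] ℂ) (-(2 * z ^ 1))).restrictScalars ℝ) z := by
  exact ((hasDerivAt_pow 2 z).neg).hasFDerivAt.restrictScalars ℝ

lemma d_nsq : fderiv ℝ (fun w : ℂ => -w ^ 2) z v = -(2 * z * v) := by
  rw [hnsq.fderiv]; simp [smul_eq_mul]; ring

lemma ha_nsq : DifferentiableAt ℝ (fun w : ℂ => -w ^ 2) z := hnsq.differentiableAt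

lemma hbmul : HasFDerivAt (fun w : ℂ => (b:ℂ) * w)
    ((ContinuousLinearMap.smulRight (1 : ℂ →L[ℂ] ℂ) ((b:ℂ) * 1)).restrictScalars ℝ) z := by
  exact ((hasDerivAt_id z).const_mul (b:ℂ)).hasFDerivAt.restrictScalars ℝ

lemma d_bmul : fderiv ℝ (fun w : ℂ => (b:ℂ) * w) z v = (b:ℂ) * v := by
  rw [hbmul.fderiv]; simp [smul_eq_mul]; ring

lemma ha_bmul : DifferentiableAt ℝ (fun w : ℂ => (b:ℂ) * w) z := hbmul.differentiableAt

lemma hhalf : HasFDerivAt (fun w : ℂ => w / 2)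
    ((ContinuousLinearMap.smulRight (1 : ℂ →L[ℂ] ℂ) ((1:ℂ) / 2)).restrictScalars ℝ) z := by
  exact ((hasDerivAt_id z).div_const 2).hasFDerivAt.restrictScalars ℝ

lemma d_half : fderiv ℝ (fun w : ℂ => w / 2) z v = v / 2 := by
  rw [hhalf.fderiv]; simp [smul_eq_mul]; ring

lemma ha_half : DifferentiableAt ℝ (fun w : ℂ => w / 2) z := hhalf.differentiableAt

lemma d_id : fderiv ℝ (fun w : ℂ => w) z v = v := by
  simp [fderiv_id']

lemma ha_id : DifferentiableAt ℝ (fun w : ℂ => w) z := differentiableAt_fun_id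

lemma d_conj : fderiv ℝ (fun w : ℂ => (starRingEnd ℂ) w) z v = (starRingEnd ℂ) v := by
  rw [(hconj (z := z)).fderiv]; simp

lemma ha_conj : DifferentiableAt ℝ (fun w : ℂ => (starRingEnd ℂ) w) z :=
  (hconj (z := z)).differentiableAt

lemma hconjsq : HasFDerivAt (fun w : ℂ => (starRingEnd ℂ) w ^ 2)
    ((starRingEnd ℂ) z • Complex.conjCLE.toContinuousLinearMap
      + (starRingEnd ℂ) z • Complex.conjCLE.toContinuousLinearMap) z := by
  have e : (fun w : ℂ => (starRingEnd ℂ) w ^ 2)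
      = fun w => (starRingEnd ℂ) w * (starRingEnd ℂ) w := by funext w; ring
  rw [e]; exact (hconj (z := z)).mul (hconj (z := z))

lemma d_conjsq : fderiv ℝ (fun w : ℂ => (starRingEnd ℂ) w ^ 2) z v
    = 2 * (starRingEnd ℂ) z * (starRingEnd ℂ) v := by
  rw [hconjsq.fderiv]; simp; ring

lemma ha_conjsq : DifferentiableAt ℝ (fun w : ℂ => (starRingEnd ℂ) w ^ 2) z :=
  hconjsq.differentiableAt

lemma hbconj : HasFDerivAt (fun w : ℂ => (b:ℂ) * (starRingEnd ℂ) w)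
    ((b:ℂ) • Complex.conjCLE.toContinuousLinearMap) z := (hconj (z := z)).const_mul (b:ℂ)

lemma d_bconj : fderiv ℝ (fun w : ℂ => (b:ℂ) * (starRingEnd ℂ) w) z v
    = (b:ℂ) * (starRingEnd ℂ) v := by
  rw [hbconj.fderiv]; simp

lemma ha_bconj : DifferentiableAt ℝ (fun w : ℂ => (b:ℂ) * (starRingEnd ℂ) w) z :=
  hbconj.differentiableAt

lemma hconjhalf : HasFDerivAt (fun w : ℂ => (starRingEnd ℂ) w / 2)
    ((2:ℂ)⁻¹ • Complex.conjCLE.toContinuousLinearMap) z := by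
  have e : (fun w : ℂ => (starRingEnd ℂ) w / 2) = fun w => (2:ℂ)⁻¹ * (starRingEnd ℂ) w := by
    funext w; ring
  rw [e]; exact (hconj (z := z)).const_mul ((2:ℂ)⁻¹)

lemma d_conjhalf : fderiv ℝ (fun w : ℂ => (starRingEnd ℂ) w / 2) z v
    = (starRingEnd ℂ) v / 2 := by
  rw [hconjhalf.fderiv]; simp; ring

lemma ha_conjhalf : DifferentiableAt ℝ (fun w : ℂ => (starRingEnd ℂ) w / 2) z :=
  hconjhalf.differentiableAt

-- combined coefficient-smul lemmas
lemma wdz_nsq_smul (hg : DifferentiableAt ℝ g z) :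
    wdz (fun w => (-w ^ 2) • g w) z = (-(2*z)) • g z + (-z ^ 2) • wdz g z := by
  rw [wdz_smul _ ha_nsq hg, d_nsq, d_nsq,
    show ((1:ℂ)/2) * (-(2*z*1) - I * -(2*z*I)) = -(2*z) by linear_combination z * Complex.I_mul_I]

lemma wdzbar_nsq_smul (hg : DifferentiableAt ℝ g z) :
    wdzbar (fun w => (-w ^ 2) • g w) z = (-z ^ 2) • wdzbar g z := by
  rw [wdzbar_smul _ ha_nsq hg, d_nsq, d_nsq,
    show ((1:ℂ)/2) * (-(2*z*1) + I * -(2*z*I)) = 0 by linear_combination (-z) * Complex.I_mul_I]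
  simp

lemma wdz_bmul_smul (hg : DifferentiableAt ℝ g z) :
    wdz (fun w => ((b:ℂ) * w) • g w) z = (b:ℂ) • g z + ((b:ℂ) * z) • wdz g z := by
  rw [wdz_smul _ ha_bmul hg, d_bmul, d_bmul,
    show ((1:ℂ)/2) * ((b:ℂ)*1 - I * ((b:ℂ)*I)) = (b:ℂ) by
      linear_combination (-(b:ℂ)/2) * Complex.I_mul_I]

lemma wdzbar_bmul_smul (hg : DifferentiableAt ℝ g z) :
    wdzbar (fun w => ((b:ℂ) * w) • g w) z = ((b:ℂ) * z) • wdzbar g z := by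
  rw [wdzbar_smul _ ha_bmul hg, d_bmul, d_bmul,
    show ((1:ℂ)/2) * ((b:ℂ)*1 + I * ((b:ℂ)*I)) = 0 by
      linear_combination ((b:ℂ)/2) * Complex.I_mul_I]
  simp

lemma wdz_half_smul (hg : DifferentiableAt ℝ g z) :
    wdz (fun w => (w / 2) • g w) z = ((1:ℂ)/2) • g z + (z / 2) • wdz g z := by
  rw [wdz_smul _ ha_half hg, d_half, d_half,
    show ((1:ℂ)/2) * ((1:ℂ)/2 - I * (I/2)) = (1:ℂ)/2 by
      linear_combination (-(1:ℂ)/4) * Complex.I_mul_I]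

lemma wdzbar_half_smul (hg : DifferentiableAt ℝ g z) :
    wdzbar (fun w => (w / 2) • g w) z = (z / 2) • wdzbar g z := by
  rw [wdzbar_smul _ ha_half hg, d_half, d_half,
    show ((1:ℂ)/2) * ((1:ℂ)/2 + I * (I/2)) = 0 by
      linear_combination ((1:ℂ)/4) * Complex.I_mul_I]
  simp

lemma wdz_id_smul (hg : DifferentiableAt ℝ g z) :
    wdz (fun w => w • g w) z = g z + z • wdz g z := by
  rw [wdz_smul _ ha_id hg, d_id, d_id,
    show ((1:ℂ)/2) * (1 - I * I) = 1 by linear_combination (-(1:ℂ)/2) * Complex.I_mul_I]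
  simp

lemma wdzbar_id_smul (hg : DifferentiableAt ℝ g z) :
    wdzbar (fun w => w • g w) z = z • wdzbar g z := by
  rw [wdzbar_smul _ ha_id hg, d_id, d_id,
    show ((1:ℂ)/2) * (1 + I * I) = 0 by linear_combination ((1:ℂ)/2) * Complex.I_mul_I]
  simp

lemma wdz_conj_smul (hg : DifferentiableAt ℝ g z) :
    wdz (fun w => (starRingEnd ℂ) w • g w) z = (starRingEnd ℂ) z • wdz g z := by
  rw [wdz_smul _ ha_conj hg, d_conj, d_conj,
    show ((1:ℂ)/2) * ((starRingEnd ℂ) 1 - I * (starRingEnd ℂ) I) = 0 by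
      simp only [map_one, Complex.conj_I]; ring_nf; try simp only [Complex.I_sq]; try ring]
  simp

lemma wdzbar_conj_smul (hg : DifferentiableAt ℝ g z) :
    wdzbar (fun w => (starRingEnd ℂ) w • g w) z = g z + (starRingEnd ℂ) z • wdzbar g z := by
  rw [wdzbar_smul _ ha_conj hg, d_conj, d_conj,
    show ((1:ℂ)/2) * ((starRingEnd ℂ) 1 + I * (starRingEnd ℂ) I) = 1 by
      simp only [map_one, Complex.conj_I]; ring_nf; try simp only [Complex.I_sq]; try ring]
  simp

lemma wdz_conjsq_smul (hg : DifferentiableAt ℝ g z) :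
    wdz (fun w => ((starRingEnd ℂ) w ^ 2) • g w) z = ((starRingEnd ℂ) z ^ 2) • wdz g z := by
  rw [wdz_smul _ ha_conjsq hg, d_conjsq, d_conjsq,
    show ((1:ℂ)/2) * (2 * (starRingEnd ℂ) z * (starRingEnd ℂ) 1
        - I * (2 * (starRingEnd ℂ) z * (starRingEnd ℂ) I)) = 0 by
      simp only [map_one, Complex.conj_I]; ring_nf; try simp only [Complex.I_sq]; try ring]
  simp

lemma wdzbar_conjsq_smul (hg : DifferentiableAt ℝ g z) :
    wdzbar (fun w => ((starRingEnd ℂ) w ^ 2) • g w) z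
      = (2 * (starRingEnd ℂ) z) • g z + ((starRingEnd ℂ) z ^ 2) • wdzbar g z := by
  rw [wdzbar_smul _ ha_conjsq hg, d_conjsq, d_conjsq,
    show ((1:ℂ)/2) * (2 * (starRingEnd ℂ) z * (starRingEnd ℂ) 1
        + I * (2 * (starRingEnd ℂ) z * (starRingEnd ℂ) I)) = 2 * (starRingEnd ℂ) z by
      simp only [map_one, Complex.conj_I]; ring_nf; try simp only [Complex.I_sq]; try ring]

lemma wdz_bconj_smul (hg : DifferentiableAt ℝ g z) :
    wdz (fun w => ((b:ℂ) * (starRingEnd ℂ) w) • g w) z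
      = ((b:ℂ) * (starRingEnd ℂ) z) • wdz g z := by
  rw [wdz_smul _ ha_bconj hg, d_bconj, d_bconj,
    show ((1:ℂ)/2) * ((b:ℂ) * (starRingEnd ℂ) 1 - I * ((b:ℂ) * (starRingEnd ℂ) I)) = 0 by
      simp only [map_one, Complex.conj_I]; ring_nf; try simp only [Complex.I_sq]; try ring]
  simp

lemma wdzbar_bconj_smul (hg : DifferentiableAt ℝ g z) :
    wdzbar (fun w => ((b:ℂ) * (starRingEnd ℂ) w) • g w) z
      = (b:ℂ) • g z + ((b:ℂ) * (starRingEnd ℂ) z) • wdzbar g z := by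
  rw [wdzbar_smul _ ha_bconj hg, d_bconj, d_bconj,
    show ((1:ℂ)/2) * ((b:ℂ) * (starRingEnd ℂ) 1 + I * ((b:ℂ) * (starRingEnd ℂ) I)) = (b:ℂ) by
      simp only [map_one, Complex.conj_I]; ring_nf; try simp only [Complex.I_sq]; try ring]

lemma wdz_conjhalf_smul (hg : DifferentiableAt ℝ g z) :
    wdz (fun w => ((starRingEnd ℂ) w / 2) • g w) z
      = ((starRingEnd ℂ) z / 2) • wdz g z := by
  rw [wdz_smul _ ha_conjhalf hg, d_conjhalf, d_conjhalf,
    show ((1:ℂ)/2) * ((starRingEnd ℂ) 1 / 2 - I * ((starRingEnd ℂ) I / 2)) = 0 by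
      simp only [map_one, Complex.conj_I]; ring_nf; try simp only [Complex.I_sq]; try ring]
  simp

lemma wdzbar_conjhalf_smul (hg : DifferentiableAt ℝ g z) :
    wdzbar (fun w => ((starRingEnd ℂ) w / 2) • g w) z
      = ((1:ℂ)/2) • g z + ((starRingEnd ℂ) z / 2) • wdzbar g z := by
  rw [wdzbar_smul _ ha_conjhalf hg, d_conjhalf, d_conjhalf,
    show ((1:ℂ)/2) * ((starRingEnd ℂ) 1 / 2 + I * ((starRingEnd ℂ) I / 2)) = (1:ℂ)/2 by
      simp only [map_one, Complex.conj_I]; ring_nf; try simp only [Complex.I_sq]; try ring]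

end helpers

section operators
variable {f : ℂ → (Fin 2 → ℂ)} {b : ℝ}

lemma Mplus_apply (b : ℝ) (g : ℂ → (Fin 2 → ℂ)) (z : ℂ) :
    Mplus b g z = (-z ^ 2) • wdz g z + wdzbar g z + ((b : ℂ) * z) • g z
      - (z / 2) • sigmaZ (g z) := rfl

lemma Mminus_apply (b : ℝ) (g : ℂ → (Fin 2 → ℂ)) (z : ℂ) :
    Mminus b g z = wdz g z - ((starRingEnd ℂ) z ^ 2) • wdzbar g z
      - ((b : ℂ) * (starRingEnd ℂ) z) • g z + ((starRingEnd ℂ) z / 2) • sigmaZ (g z) := rfl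

lemma Mthree_apply (b : ℝ) (g : ℂ → (Fin 2 → ℂ)) (z : ℂ) :
    Mthree b g z = z • wdz g z - (starRingEnd ℂ) z • wdzbar g z - (b : ℂ) • g z
      + ((1 : ℂ) / 2) • sigmaZ (g z) := rfl

lemma wdz_Mplus (hf : ContDiff ℝ (⊤ : ℕ∞) f) (z : ℂ) :
    wdz (Mplus b f) z
      = ((-(2*z)) • wdz f z + (-z ^ 2) • wdz (wdz f) z) + wdz (wdzbar f) z
        + ((b:ℂ) • f z + ((b:ℂ) * z) • wdz f z)
        - (((1:ℂ)/2) • sigmaZ (f z) + (z / 2) • sigmaZ (wdz f z)) := by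
  have hW1 : DifferentiableAt ℝ (wdz f) z :=
    ((contDiff_wdz hf).differentiable (by simp)).differentiableAt
  have hW2 : DifferentiableAt ℝ (wdzbar f) z :=
    ((contDiff_wdzbar hf).differentiable (by simp)).differentiableAt
  have hF : DifferentiableAt ℝ f z := (hf.differentiable (by simp)).differentiableAt
  have hS : DifferentiableAt ℝ (fun w => sigmaZ (f w)) z :=
    ((contDiff_sigma hf).differentiable (by simp)).differentiableAt
  have hA : DifferentiableAt ℝ (fun w => (-w ^ 2) • wdz f w) z := ha_nsq.smul hW1
  have hC : DifferentiableAt ℝ (fun w => ((b:ℂ) * w) • f w) z := ha_bmul.smul hF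
  have hD : DifferentiableAt ℝ (fun w => (w / 2) • sigmaZ (f w)) z := ha_half.smul hS
  have e : Mplus b f = fun w =>
      (-w ^ 2) • wdz f w + wdzbar f w + ((b:ℂ) * w) • f w - (w / 2) • sigmaZ (f w) := rfl
  rw [e, wdz_sub ((hA.fun_add hW2).fun_add hC) hD, wdz_add (hA.fun_add hW2) hC, wdz_add hA hW2,
    wdz_nsq_smul hW1, wdz_bmul_smul hF, wdz_half_smul hS, wdz_sigma hf]

lemma wdzbar_Mplus (hf : ContDiff ℝ (⊤ : ℕ∞) f) (z : ℂ) :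
    wdzbar (Mplus b f) z
      = (-z ^ 2) • wdzbar (wdz f) z + wdzbar (wdzbar f) z
        + ((b:ℂ) * z) • wdzbar f z - (z / 2) • sigmaZ (wdzbar f z) := by
  have hW1 : DifferentiableAt ℝ (wdz f) z :=
    ((contDiff_wdz hf).differentiable (by simp)).differentiableAt
  have hW2 : DifferentiableAt ℝ (wdzbar f) z :=
    ((contDiff_wdzbar hf).differentiable (by simp)).differentiableAt
  have hF : DifferentiableAt ℝ f z := (hf.differentiable (by simp)).differentiableAt
  have hS : DifferentiableAt ℝ (fun w => sigmaZ (f w)) z :=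
    ((contDiff_sigma hf).differentiable (by simp)).differentiableAt
  have hA : DifferentiableAt ℝ (fun w => (-w ^ 2) • wdz f w) z := ha_nsq.smul hW1
  have hC : DifferentiableAt ℝ (fun w => ((b:ℂ) * w) • f w) z := ha_bmul.smul hF
  have hD : DifferentiableAt ℝ (fun w => (w / 2) • sigmaZ (f w)) z := ha_half.smul hS
  have e : Mplus b f = fun w =>
      (-w ^ 2) • wdz f w + wdzbar f w + ((b:ℂ) * w) • f w - (w / 2) • sigmaZ (f w) := rfl
  rw [e, wdzbar_sub ((hA.fun_add hW2).fun_add hC) hD, wdzbar_add (hA.fun_add hW2) hC, wdzbar_add hA hW2,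
    wdzbar_nsq_smul hW1, wdzbar_bmul_smul hF, wdzbar_half_smul hS, wdzbar_sigma hf]

lemma wdz_Mminus (hf : ContDiff ℝ (⊤ : ℕ∞) f) (z : ℂ) :
    wdz (Mminus b f) z
      = wdz (wdz f) z - ((starRingEnd ℂ) z ^ 2) • wdz (wdzbar f) z
        - ((b:ℂ) * (starRingEnd ℂ) z) • wdz f z
        + ((starRingEnd ℂ) z / 2) • sigmaZ (wdz f z) := by
  have hW1 : DifferentiableAt ℝ (wdz f) z :=
    ((contDiff_wdz hf).differentiable (by simp)).differentiableAt
  have hW2 : DifferentiableAt ℝ (wdzbar f) z :=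
    ((contDiff_wdzbar hf).differentiable (by simp)).differentiableAt
  have hF : DifferentiableAt ℝ f z := (hf.differentiable (by simp)).differentiableAt
  have hS : DifferentiableAt ℝ (fun w => sigmaZ (f w)) z :=
    ((contDiff_sigma hf).differentiable (by simp)).differentiableAt
  have hB : DifferentiableAt ℝ (fun w => ((starRingEnd ℂ) w ^ 2) • wdzbar f w) z :=
    ha_conjsq.smul hW2
  have hC : DifferentiableAt ℝ (fun w => ((b:ℂ) * (starRingEnd ℂ) w) • f w) z :=
    ha_bconj.smul hF
  have hD : DifferentiableAt ℝ (fun w => ((starRingEnd ℂ) w / 2) • sigmaZ (f w)) z :=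
    ha_conjhalf.smul hS
  have e : Mminus b f = fun w =>
      wdz f w - ((starRingEnd ℂ) w ^ 2) • wdzbar f w - ((b:ℂ) * (starRingEnd ℂ) w) • f w
        + ((starRingEnd ℂ) w / 2) • sigmaZ (f w) := rfl
  rw [e, wdz_add ((hW1.fun_sub hB).fun_sub hC) hD, wdz_sub (hW1.fun_sub hB) hC, wdz_sub hW1 hB,
    wdz_conjsq_smul hW2, wdz_bconj_smul hF, wdz_conjhalf_smul hS, wdz_sigma hf]

lemma wdzbar_Mminus (hf : ContDiff ℝ (⊤ : ℕ∞) f) (z : ℂ) :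
    wdzbar (Mminus b f) z
      = wdzbar (wdz f) z
        - ((2 * (starRingEnd ℂ) z) • wdzbar f z + ((starRingEnd ℂ) z ^ 2) • wdzbar (wdzbar f) z)
        - ((b:ℂ) • f z + ((b:ℂ) * (starRingEnd ℂ) z) • wdzbar f z)
        + (((1:ℂ)/2) • sigmaZ (f z) + ((starRingEnd ℂ) z / 2) • sigmaZ (wdzbar f z)) := by
  have hW1 : DifferentiableAt ℝ (wdz f) z :=
    ((contDiff_wdz hf).differentiable (by simp)).differentiableAt
  have hW2 : DifferentiableAt ℝ (wdzbar f) z :=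
    ((contDiff_wdzbar hf).differentiable (by simp)).differentiableAt
  have hF : DifferentiableAt ℝ f z := (hf.differentiable (by simp)).differentiableAt
  have hS : DifferentiableAt ℝ (fun w => sigmaZ (f w)) z :=
    ((contDiff_sigma hf).differentiable (by simp)).differentiableAt
  have hB : DifferentiableAt ℝ (fun w => ((starRingEnd ℂ) w ^ 2) • wdzbar f w) z :=
    ha_conjsq.smul hW2
  have hC : DifferentiableAt ℝ (fun w => ((b:ℂ) * (starRingEnd ℂ) w) • f w) z :=
    ha_bconj.smul hF
  have hD : DifferentiableAt ℝ (fun w => ((starRingEnd ℂ) w / 2) • sigmaZ (f w)) z :=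
    ha_conjhalf.smul hS
  have e : Mminus b f = fun w =>
      wdz f w - ((starRingEnd ℂ) w ^ 2) • wdzbar f w - ((b:ℂ) * (starRingEnd ℂ) w) • f w
        + ((starRingEnd ℂ) w / 2) • sigmaZ (f w) := rfl
  rw [e, wdzbar_add ((hW1.fun_sub hB).fun_sub hC) hD, wdzbar_sub (hW1.fun_sub hB) hC, wdzbar_sub hW1 hB,
    wdzbar_conjsq_smul hW2, wdzbar_bconj_smul hF, wdzbar_conjhalf_smul hS, wdzbar_sigma hf]

lemma wdz_Mthree (hf : ContDiff ℝ (⊤ : ℕ∞) f) (z : ℂ) :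
    wdz (Mthree b f) z
      = (wdz f z + z • wdz (wdz f) z) - (starRingEnd ℂ) z • wdz (wdzbar f) z
        - (b:ℂ) • wdz f z + ((1:ℂ)/2) • sigmaZ (wdz f z) := by
  have hW1 : DifferentiableAt ℝ (wdz f) z :=
    ((contDiff_wdz hf).differentiable (by simp)).differentiableAt
  have hW2 : DifferentiableAt ℝ (wdzbar f) z :=
    ((contDiff_wdzbar hf).differentiable (by simp)).differentiableAt
  have hF : DifferentiableAt ℝ f z := (hf.differentiable (by simp)).differentiableAt
  have hS : DifferentiableAt ℝ (fun w => sigmaZ (f w)) z :=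
    ((contDiff_sigma hf).differentiable (by simp)).differentiableAt
  have hA : DifferentiableAt ℝ (fun w => w • wdz f w) z := ha_id.smul hW1
  have hB : DifferentiableAt ℝ (fun w => (starRingEnd ℂ) w • wdzbar f w) z := ha_conj.smul hW2
  have hC : DifferentiableAt ℝ (fun w => (b:ℂ) • f w) z := hF.fun_const_smul ((b:ℂ))
  have hD : DifferentiableAt ℝ (fun w => ((1:ℂ)/2) • sigmaZ (f w)) z := hS.fun_const_smul _
  have e : Mthree b f = fun w =>
      w • wdz f w - (starRingEnd ℂ) w • wdzbar f w - (b:ℂ) • f w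
        + ((1:ℂ)/2) • sigmaZ (f w) := rfl
  rw [e, wdz_add ((hA.fun_sub hB).fun_sub hC) hD, wdz_sub (hA.fun_sub hB) hC, wdz_sub hA hB,
    wdz_id_smul hW1, wdz_conj_smul hW2, wdz_const_smul ((b:ℂ)) hF,
    wdz_const_smul (((1:ℂ)/2)) hS, wdz_sigma hf]

lemma wdzbar_Mthree (hf : ContDiff ℝ (⊤ : ℕ∞) f) (z : ℂ) :
    wdzbar (Mthree b f) z
      = z • wdzbar (wdz f) z
        - (wdzbar f z + (starRingEnd ℂ) z • wdzbar (wdzbar f) z)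
        - (b:ℂ) • wdzbar f z + ((1:ℂ)/2) • sigmaZ (wdzbar f z) := by
  have hW1 : DifferentiableAt ℝ (wdz f) z :=
    ((contDiff_wdz hf).differentiable (by simp)).differentiableAt
  have hW2 : DifferentiableAt ℝ (wdzbar f) z :=
    ((contDiff_wdzbar hf).differentiable (by simp)).differentiableAt
  have hF : DifferentiableAt ℝ f z := (hf.differentiable (by simp)).differentiableAt
  have hS : DifferentiableAt ℝ (fun w => sigmaZ (f w)) z :=
    ((contDiff_sigma hf).differentiable (by simp)).differentiableAt
  have hA : DifferentiableAt ℝ (fun w => w • wdz f w) z := ha_id.smul hW1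
  have hB : DifferentiableAt ℝ (fun w => (starRingEnd ℂ) w • wdzbar f w) z := ha_conj.smul hW2
  have hC : DifferentiableAt ℝ (fun w => (b:ℂ) • f w) z := hF.fun_const_smul ((b:ℂ))
  have hD : DifferentiableAt ℝ (fun w => ((1:ℂ)/2) • sigmaZ (f w)) z := hS.fun_const_smul _
  have e : Mthree b f = fun w =>
      w • wdz f w - (starRingEnd ℂ) w • wdzbar f w - (b:ℂ) • f w
        + ((1:ℂ)/2) • sigmaZ (f w) := rfl
  rw [e, wdzbar_add ((hA.fun_sub hB).fun_sub hC) hD, wdzbar_sub (hA.fun_sub hB) hC, wdzbar_sub hA hB,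
    wdzbar_id_smul hW1, wdzbar_conj_smul hW2, wdzbar_const_smul ((b:ℂ)) hF,
    wdzbar_const_smul (((1:ℂ)/2)) hS, wdzbar_sigma hf]

end operators

/-- The infinitesimal symmetries `M₊, M₋, M₃` satisfy the `sl(2)` commutation relations
`[M₃,M₊] = M₊`, `[M₃,M₋] = -M₋`, `[M₊,M₋] = 2M₃` on smooth ℂ²-valued functions. -/
theorem sl2_commutation_relations (b : ℝ) (f : ℂ → (Fin 2 → ℂ)) (hf : ContDiff ℝ (⊤ : ℕ∞) f) :
    (∀ z : ℂ, Mthree b (Mplus b f) z - Mplus b (Mthree b f) z = Mplus b f z)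
    ∧ (∀ z : ℂ, Mthree b (Mminus b f) z - Mminus b (Mthree b f) z = -(Mminus b f z))
    ∧ (∀ z : ℂ, Mplus b (Mminus b f) z - Mminus b (Mplus b f) z = (2 : ℂ) • Mthree b f z) := by
  refine ⟨fun z => ?_, fun z => ?_, fun z => ?_⟩ <;>
  · simp only [Mthree_apply, Mplus_apply, Mminus_apply, wdz_Mplus hf, wdzbar_Mplus hf,
      wdz_Mminus hf, wdzbar_Mminus hf, wdz_Mthree hf, wdzbar_Mthree hf, wdz_comm hf,
      sigmaZ_add, sigmaZ_sub, sigmaZ_smul, sigmaZ_sigmaZ]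
    module
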